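/- arXiv:2405.09388 — 2 statements merged into one kernel-verified Lean document; each statement's English description precedes it below -/
import Mathlib

section
/- Let (𝔘, G, α) be a C*-dynamical system and ω a state such that for some net g^i in G, lim_i (ω(α_{g^i}(A)B) − ω(α_{g^i}A)ω(B)) = 0 for all A, B ∈ 𝔘. Then for every n ≥ 2 and all A_1,...,A_n ∈ 𝔘, the n-th classical cumulant satisfies lim_i c_n(α_{g^i}A_1, A_2, ..., A_n) = 0. -/
open scoped Classical
open Filter Topology

noncomputable section

/-- `π` is a set-partition of the finite set `S ⊆ ℕ`: a collection of nonempty subsets of `S`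
such that every element of `S` lies in exactly one of them. -/
def IsSetPartition (S : Finset ℕ) (π : Finset (Finset ℕ)) : Prop :=
  (∀ V ∈ π, V ⊆ S) ∧ (∀ V ∈ π, V.Nonempty) ∧ ∀ a ∈ S, ∃! V, V ∈ π ∧ a ∈ V

/-- The finset of all set-partitions of `S`. -/
def setPartitions (S : Finset ℕ) : Finset (Finset (Finset ℕ)) :=
  S.powerset.powerset.filter (IsSetPartition S)

/-- A family of blocks is non-crossing if there are no `a < b < c < d` with `a, c` in one
block and `b, d` in a different block. -/
def IsNonCrossing (π : Finset (Finset ℕ)) : Prop :=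
  ¬ ∃ a b c d : ℕ, a < b ∧ b < c ∧ c < d ∧
      ∃ V ∈ π, ∃ W ∈ π, V ≠ W ∧ a ∈ V ∧ c ∈ V ∧ b ∈ W ∧ d ∈ W

/-- The finset of all non-crossing partitions of `S`. -/
def ncPartitions (S : Finset ℕ) : Finset (Finset (Finset ℕ)) :=
  (setPartitions S).filter IsNonCrossing

variable {𝔘 : Type*}

/-- The ordered list `A_{i_1}, …, A_{i_s}` of observables indexed by `V = {i_1 < ⋯ < i_s}`. -/
def blockList (A : ℕ → 𝔘) (V : Finset ℕ) : List 𝔘 :=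
  (V.sort (· ≤ ·)).map A

/-- The ordered product `A_{i_1} ⋯ A_{i_s}` over the block `V = {i_1 < ⋯ < i_s}`. -/
def blockProd [Monoid 𝔘] (A : ℕ → 𝔘) (V : Finset ℕ) : 𝔘 :=
  (blockList A V).prod

/-- The joint classical cumulant of `ω` of the observables `A_i`, `i ∈ S` (order preserved):
`c(S) = ∑_{π ∈ P(S)} (-1)^{|π|-1}(|π|-1)! ∏_{V ∈ π} ω(∏_{i ∈ V} A_i)`. -/
def cumulant [Monoid 𝔘] (ω : 𝔘 → ℂ) (A : ℕ → 𝔘) (S : Finset ℕ) : ℂ :=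
  ∑ π ∈ setPartitions S,
    (-1 : ℂ) ^ (π.card - 1) * ((π.card - 1).factorial : ℂ) * ∏ V ∈ π, ω (blockProd A V)

/-- `κ` (as a function of the ordered list of observables) is the family of free cumulants of
`ω`: it satisfies the moments-to-free-cumulants formula over non-crossing partitions. -/
def IsFreeCumulantFamily [Monoid 𝔘] (ω : 𝔘 → ℂ) (κ : List 𝔘 → ℂ) : Prop :=
  ∀ (A : ℕ → 𝔘) (S : Finset ℕ), S.Nonempty →
    ω (blockProd A S) = ∑ π ∈ ncPartitions S, ∏ V ∈ π, κ (blockList A V)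

/-- A state on a unital C*-algebra: a positive unital linear functional. -/
structure IsState [NormedRing 𝔘] [StarRing 𝔘] [NormedAlgebra ℂ 𝔘] (ω : 𝔘 →ₗ[ℂ] ℂ) : Prop where
  unital : ω 1 = 1
  positive : ∀ a : 𝔘, 0 ≤ (ω (star a * a)).re ∧ (ω (star a * a)).im = 0

/-- `α` is a representation of the group `G` by *-automorphisms. -/
def IsStarAutoRep {G : Type*} [Monoid G] [Ring 𝔘] [Algebra ℂ 𝔘] [StarRing 𝔘]
    (α : G → 𝔘 ≃⋆ₐ[ℂ] 𝔘) : Prop :=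
  ∀ (g h : G) (x : 𝔘), α (g * h) x = α g (α h x)

/-!
Put `A_1` first in every block. For a partition `π` whose block containing `1` is `{1} ∪ V`, the
product of moments is `ω(α_g A_1 · A_V) ∏_{W ≠ V} ω(A_W)`; writing
`ω(α_g A_1 · A_V) = (ω(α_g A_1 · A_V) - ω(α_g A_1) ω(A_V)) + ω(α_g A_1) ω(A_V)` splits the
cumulant into a fixed linear combination of clustering defects, which tend to `0`, plus
`ω(α_g A_1)` times the cumulant with `A_1` replaced by `1`. The latter vanishes: partitions of `S`
correspond to a partition `π'` of `S \ {1}` together with either a block of `π'` to put `1` into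
or a new singleton block, and the Möbius weights then cancel as
`(-1)^k k! + k (-1)^(k-1) (k-1)! = 0`.
-/

open Finset

theorem mem_setPartitions {S : Finset ℕ} {π : Finset (Finset ℕ)} :
    π ∈ setPartitions S ↔ IsSetPartition S π := by
  simp only [setPartitions, mem_filter, mem_powerset, and_iff_right_iff_imp]
  exact fun h V hV => mem_powerset.2 (h.1 V hV)

theorem isSetPartition_of_cover_of_disjoint {S : Finset ℕ} {π : Finset (Finset ℕ)}
    (hsub : ∀ V ∈ π, V ⊆ S) (hne : ∀ V ∈ π, V.Nonempty) (hcover : ∀ b ∈ S, ∃ V ∈ π, b ∈ V)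
    (hdisj : ∀ V ∈ π, ∀ W ∈ π, ∀ b ∈ V, b ∈ W → V = W) : IsSetPartition S π := by
  refine ⟨hsub, hne, fun b hb => ?_⟩
  obtain ⟨V, hV, hbV⟩ := hcover b hb
  exact ⟨V, ⟨hV, hbV⟩, fun W hW => hdisj W hW.1 V hV b hW.2 hbV⟩

/-- The block of `π` containing `a`; junk (`∅`) if there is none. -/
def blockOf (π : Finset (Finset ℕ)) (a : ℕ) : Finset ℕ :=
  (π.filter (a ∈ ·)).sup id

/-- Adds `a` to the block `W` of `π`, or as a new singleton block when `W = ∅`. -/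
def extendPartition (a : ℕ) (π : Finset (Finset ℕ)) (W : Finset ℕ) : Finset (Finset ℕ) :=
  insert (insert a W) (π.erase W)

def erasePartition (a : ℕ) (π : Finset (Finset ℕ)) : Finset (Finset ℕ) :=
  (π.image (·.erase a)).erase ∅

theorem mem_erasePartition {a : ℕ} {π : Finset (Finset ℕ)} {X : Finset ℕ} :
    X ∈ erasePartition a π ↔ X ≠ ∅ ∧ ∃ V ∈ π, V.erase a = X := by
  simp [erasePartition]

theorem image_erase_eq_self {a : ℕ} {π : Finset (Finset ℕ)} (h : ∀ V ∈ π, a ∉ V) :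
    π.image (·.erase a) = π := by
  conv_rhs => rw [← image_id' (s := π)]
  exact image_congr fun V hV => erase_eq_of_notMem (h V hV)

namespace IsSetPartition

variable {S : Finset ℕ} {π : Finset (Finset ℕ)} {a : ℕ} {V W : Finset ℕ}

theorem eq_of_mem_of_mem (h : IsSetPartition S π) (hV : V ∈ π) (hW : W ∈ π) (haV : a ∈ V)
    (haW : a ∈ W) : V = W := by
  obtain ⟨U, -, hU⟩ := h.2.2 a (h.1 V hV haV)
  rw [hU V ⟨hV, haV⟩, hU W ⟨hW, haW⟩]

theorem empty_notMem (h : IsSetPartition S π) : ∅ ∉ π :=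
  fun h0 => not_nonempty_empty (h.2.1 ∅ h0)

theorem nonempty (h : IsSetPartition S π) (hS : S.Nonempty) : π.Nonempty :=
  let ⟨b, hb⟩ := hS
  let ⟨V, ⟨hV, _⟩, _⟩ := h.2.2 b hb
  ⟨V, hV⟩

theorem notMem_of_mem_erase (h : IsSetPartition (S.erase a) π) (hV : V ∈ π) : a ∉ V :=
  fun haV => notMem_erase a S (h.1 V hV haV)

theorem notMem_of_mem_insert_empty (h : IsSetPartition (S.erase a) π) (hW : W ∈ insert ∅ π) :
    a ∉ W := by
  rcases mem_insert.1 hW with rfl | hW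
  exacts [notMem_empty a, h.notMem_of_mem_erase hW]

theorem insert_notMem_erase (h : IsSetPartition (S.erase a) π) : insert a W ∉ π.erase W :=
  fun hmem => h.notMem_of_mem_erase (mem_of_mem_erase hmem) (mem_insert_self a W)

theorem blockOf_eq (h : IsSetPartition S π) (hV : V ∈ π) (haV : a ∈ V) : blockOf π a = V := by
  have hfilter : π.filter (a ∈ ·) = {V} := by
    ext W
    simp only [mem_filter, mem_singleton]
    exact ⟨fun hW => h.eq_of_mem_of_mem hW.1 hV hW.2 haV, fun hW => hW ▸ ⟨hV, haV⟩⟩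
  rw [blockOf, hfilter, sup_singleton, id]

theorem blockOf_mem (h : IsSetPartition S π) (ha : a ∈ S) :
    blockOf π a ∈ π ∧ a ∈ blockOf π a := by
  obtain ⟨V, ⟨hV, haV⟩, -⟩ := h.2.2 a ha
  rw [h.blockOf_eq hV haV]
  exact ⟨hV, haV⟩

theorem notMem_of_mem_erase_blockOf (h : IsSetPartition S π) (hV : V ∈ π.erase (blockOf π a)) :
    a ∉ V :=
  fun haV => (mem_erase.1 hV).1 (h.blockOf_eq (mem_of_mem_erase hV) haV).symm

theorem erase_blockOf_notMem (h : IsSetPartition S π) (ha : a ∈ S) :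
    (blockOf π a).erase a ∉ π := by
  intro hmem
  obtain ⟨b, hb⟩ := h.2.1 _ hmem
  have hself := h.eq_of_mem_of_mem hmem (h.blockOf_mem ha).1 hb (mem_of_mem_erase hb)
  exact notMem_erase a _ (hself ▸ (h.blockOf_mem ha).2)

theorem extend (h : IsSetPartition (S.erase a) π) (ha : a ∈ S) (hW : W ∈ insert ∅ π) :
    IsSetPartition S (extendPartition a π W) := by
  have hWsub : W ⊆ S.erase a := by
    rcases mem_insert.1 hW with rfl | hW
    exacts [empty_subset _, h.1 W hW]
  have hsep : ∀ U ∈ π.erase W, ∀ b ∈ U, b ∉ insert a W := by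
    intro U hU b hbU hbW
    rcases mem_insert.1 hbW with rfl | hbW
    · exact h.notMem_of_mem_erase (mem_of_mem_erase hU) hbU
    · have hWπ : W ∈ π := (mem_insert.1 hW).resolve_left (ne_empty_of_mem hbW)
      exact (mem_erase.1 hU).1 (h.eq_of_mem_of_mem (mem_of_mem_erase hU) hWπ hbU hbW)
  refine isSetPartition_of_cover_of_disjoint ?_ ?_ ?_ ?_
  · intro U hU
    rcases mem_insert.1 hU with rfl | hU
    · exact insert_subset ha (hWsub.trans (erase_subset a S))
    · exact (h.1 U (mem_of_mem_erase hU)).trans (erase_subset a S)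
  · intro U hU
    rcases mem_insert.1 hU with rfl | hU
    exacts [insert_nonempty a W, h.2.1 U (mem_of_mem_erase hU)]
  · intro b hb
    by_cases hba : b = a
    · exact ⟨insert a W, mem_insert_self _ _, hba ▸ mem_insert_self a W⟩
    obtain ⟨U, ⟨hU, hbU⟩, -⟩ := h.2.2 b (mem_erase.2 ⟨hba, hb⟩)
    by_cases hUW : U = W
    · exact ⟨insert a W, mem_insert_self _ _, mem_insert_of_mem (hUW ▸ hbU)⟩
    · exact ⟨U, mem_insert_of_mem (mem_erase.2 ⟨hUW, hU⟩), hbU⟩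
  · intro U hU U' hU' b hbU hbU'
    rcases mem_insert.1 hU with rfl | hU <;> rcases mem_insert.1 hU' with rfl | hU'
    · rfl
    · exact absurd hbU (hsep U' hU' b hbU')
    · exact absurd hbU' (hsep U hU b hbU)
    · exact h.eq_of_mem_of_mem (mem_of_mem_erase hU) (mem_of_mem_erase hU') hbU hbU'

theorem erase (h : IsSetPartition S π) (a : ℕ) :
    IsSetPartition (S.erase a) (erasePartition a π) := by
  refine isSetPartition_of_cover_of_disjoint ?_ ?_ ?_ ?_
  · intro X hX
    obtain ⟨-, V, hV, rfl⟩ := mem_erasePartition.1 hX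
    exact erase_subset_erase a (h.1 V hV)
  · exact fun X hX => nonempty_iff_ne_empty.2 (mem_erasePartition.1 hX).1
  · intro b hb
    obtain ⟨hba, hbS⟩ := mem_erase.1 hb
    obtain ⟨V, ⟨hV, hbV⟩, -⟩ := h.2.2 b hbS
    have hbV' : b ∈ V.erase a := mem_erase.2 ⟨hba, hbV⟩
    exact ⟨V.erase a, mem_erasePartition.2 ⟨ne_empty_of_mem hbV', V, hV, rfl⟩, hbV'⟩
  · intro X hX Y hY b hbX hbY
    obtain ⟨-, V, hV, rfl⟩ := mem_erasePartition.1 hX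
    obtain ⟨-, U, hU, rfl⟩ := mem_erasePartition.1 hY
    rw [h.eq_of_mem_of_mem hV hU (mem_of_mem_erase hbX) (mem_of_mem_erase hbY)]

theorem erasePartition_extendPartition (h : IsSetPartition (S.erase a) π) (hW : W ∈ insert ∅ π) :
    erasePartition a (extendPartition a π W) = π := by
  have haW := h.notMem_of_mem_insert_empty hW
  rw [erasePartition, extendPartition, image_insert, erase_insert haW,
    image_erase_eq_self fun V hV => h.notMem_of_mem_erase (mem_of_mem_erase hV)]
  rcases mem_insert.1 hW with rfl | hWπ
  · rw [erase_insert (mem_erase.not.2 fun h0 => h.empty_notMem h0.2),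
      erase_eq_of_notMem h.empty_notMem]
  · rw [insert_erase hWπ, erase_eq_of_notMem h.empty_notMem]

theorem blockOf_extendPartition (h : IsSetPartition (S.erase a) π) (ha : a ∈ S)
    (hW : W ∈ insert ∅ π) : blockOf (extendPartition a π W) a = insert a W :=
  (h.extend ha hW).blockOf_eq (mem_insert_self _ _) (mem_insert_self a W)

theorem image_erase_eq_insert (h : IsSetPartition S π) (ha : a ∈ S) :
    π.image (·.erase a) = insert ((blockOf π a).erase a) (π.erase (blockOf π a)) := by
  conv_lhs => rw [← insert_erase (h.blockOf_mem ha).1]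
  rw [image_insert, image_erase_eq_self fun V hV => h.notMem_of_mem_erase_blockOf hV]

theorem extendPartition_erasePartition (h : IsSetPartition S π) (ha : a ∈ S) :
    extendPartition a (erasePartition a π) ((blockOf π a).erase a) = π := by
  obtain ⟨hB, haB⟩ := h.blockOf_mem ha
  have hnotMem : (blockOf π a).erase a ∉ π.erase (blockOf π a) :=
    fun hmem => h.erase_blockOf_notMem ha (mem_of_mem_erase hmem)
  rw [extendPartition, erasePartition, h.image_erase_eq_insert ha, erase_right_comm,
    erase_insert_eq_erase, erase_eq_of_notMem hnotMem,
    erase_eq_of_notMem fun h0 => h.empty_notMem (mem_of_mem_erase h0), insert_erase haB,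
    insert_erase hB]

theorem erase_blockOf_mem_insert_empty (h : IsSetPartition S π) (ha : a ∈ S) :
    (blockOf π a).erase a ∈ insert ∅ (erasePartition a π) := by
  by_cases hempty : (blockOf π a).erase a = ∅
  · exact mem_insert.2 (Or.inl hempty)
  · exact mem_insert_of_mem (mem_erasePartition.2 ⟨hempty, _, (h.blockOf_mem ha).1, rfl⟩)

theorem card_extendPartition (h : IsSetPartition (S.erase a) π) (hW : W ∈ insert ∅ π) :
    (extendPartition a π W).card = if W = ∅ then π.card + 1 else π.card := by
  rw [extendPartition, card_insert_of_notMem h.insert_notMem_erase]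
  split_ifs with hempty
  · rw [hempty, erase_eq_of_notMem h.empty_notMem]
  · have hWπ := (mem_insert.1 hW).resolve_left hempty
    rw [card_erase_of_mem hWπ, Nat.sub_add_cancel (card_pos.2 ⟨W, hWπ⟩)]

theorem prod_extendPartition {M : Type*} [CommMonoid M] (h : IsSetPartition (S.erase a) π)
    (hW : W ∈ insert ∅ π) (f : Finset ℕ → M) (hf : f ∅ = 1) :
    ∏ V ∈ extendPartition a π W, f (V.erase a) = ∏ V ∈ π, f V := by
  have haW := h.notMem_of_mem_insert_empty hW
  rw [extendPartition, prod_insert h.insert_notMem_erase, erase_insert haW,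
    prod_congr rfl fun V hV => by
      rw [erase_eq_of_notMem (h.notMem_of_mem_erase (mem_of_mem_erase hV))]]
  rcases mem_insert.1 hW with rfl | hWπ
  · rw [hf, one_mul, erase_eq_of_notMem h.empty_notMem]
  · exact mul_prod_erase π f hWπ

end IsSetPartition

theorem sum_setPartitions_eq_sum_extendPartition {M : Type*} [AddCommMonoid M] {S : Finset ℕ}
    {a : ℕ} (ha : a ∈ S) (F : Finset (Finset ℕ) → M) :
    ∑ π ∈ setPartitions S, F π =
      ∑ π ∈ setPartitions (S.erase a), ∑ W ∈ insert ∅ π, F (extendPartition a π W) := by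
  rw [sum_sigma']
  symm
  refine sum_nbij' (fun p => extendPartition a p.1 p.2)
    (fun π => ⟨erasePartition a π, (blockOf π a).erase a⟩) ?_ ?_ ?_ ?_ fun _ _ => rfl
  · rintro ⟨π, W⟩ hp
    obtain ⟨hπ, hW⟩ := mem_sigma.1 hp
    exact mem_setPartitions.2 ((mem_setPartitions.1 hπ).extend ha hW)
  · intro π hπ
    have h := mem_setPartitions.1 hπ
    exact mem_sigma.2
      ⟨mem_setPartitions.2 (h.erase a), h.erase_blockOf_mem_insert_empty ha⟩
  · rintro ⟨π, W⟩ hp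
    obtain ⟨hπ, hW⟩ := mem_sigma.1 hp
    have h := mem_setPartitions.1 hπ
    have haW := h.notMem_of_mem_insert_empty hW
    simp only [h.erasePartition_extendPartition hW, h.blockOf_extendPartition ha hW,
      erase_insert haW]
  · intro π hπ
    exact (mem_setPartitions.1 hπ).extendPartition_erasePartition ha

/-- The Möbius function `μ(π, 1̂)` of the partition lattice, for `π` with `k` blocks. -/
def cumulantCoeff (R : Type*) [Ring R] (k : ℕ) : R :=
  (-1) ^ (k - 1) * ((k - 1).factorial : R)

theorem cumulantCoeff_succ_add_mul {R : Type*} [CommRing R] {k : ℕ} (hk : k ≠ 0) :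
    cumulantCoeff R (k + 1) + k * cumulantCoeff R k = 0 := by
  obtain ⟨m, rfl⟩ := Nat.exists_eq_succ_of_ne_zero hk
  simp only [cumulantCoeff, Nat.succ_sub_one, pow_succ, Nat.factorial_succ]
  push_cast
  ring

/-- Cumulants vanish as soon as one argument is the identity: this is the case
`f V = ω(∏_{i∈V} A_i)` with `A_a = 1`. -/
theorem sum_setPartitions_cumulantCoeff_mul_prod_erase {R : Type*} [CommRing R]
    {S : Finset ℕ} {a : ℕ} (ha : a ∈ S) (hS : (S.erase a).Nonempty) (f : Finset ℕ → R)
    (hf : f ∅ = 1) :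
    ∑ π ∈ setPartitions S, cumulantCoeff R π.card * ∏ V ∈ π, f (V.erase a) = 0 := by
  rw [sum_setPartitions_eq_sum_extendPartition ha]
  refine sum_eq_zero fun π hπ => ?_
  have h := mem_setPartitions.1 hπ
  calc ∑ W ∈ insert ∅ π, cumulantCoeff R (extendPartition a π W).card *
          ∏ V ∈ extendPartition a π W, f (V.erase a)
      = ∑ W ∈ insert ∅ π,
          cumulantCoeff R (if W = ∅ then π.card + 1 else π.card) * ∏ V ∈ π, f V :=
        sum_congr rfl fun W hW => by rw [h.card_extendPartition hW, h.prod_extendPartition hW f hf]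
    _ = (cumulantCoeff R (π.card + 1) + π.card * cumulantCoeff R π.card) * ∏ V ∈ π, f V := by
        rw [← sum_mul, sum_insert h.empty_notMem, if_pos rfl,
          sum_congr rfl fun W hW => by rw [if_neg (ne_of_mem_of_not_mem hW h.empty_notMem)],
          sum_const, nsmul_eq_mul]
    _ = 0 := by
        rw [cumulantCoeff_succ_add_mul (card_pos.2 (h.nonempty hS)).ne', zero_mul]

section blockProd

variable [Monoid 𝔘] {A : ℕ → 𝔘} {V : Finset ℕ} {a : ℕ}

theorem blockProd_empty (A : ℕ → 𝔘) : blockProd A ∅ = 1 := by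
  simp [blockProd, blockList]

theorem blockProd_congr {B : ℕ → 𝔘} (h : ∀ i ∈ V, A i = B i) : blockProd A V = blockProd B V :=
  congrArg List.prod (List.map_congr_left fun i hi => h i ((mem_sort _).1 hi))

theorem blockProd_eq_mul_erase (ha : a ∈ V) (hmin : ∀ b ∈ V, a ≤ b) :
    blockProd A V = A a * blockProd A (V.erase a) := by
  conv_lhs => rw [← insert_erase ha]
  rw [blockProd, blockList, sort_insert (· ≤ ·) (fun b hb => hmin b (mem_of_mem_erase hb))
    (notMem_erase a V), List.map_cons, List.prod_cons, blockProd, blockList]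

theorem blockProd_update_of_notMem (ha : a ∉ V) (X : 𝔘) :
    blockProd (Function.update A a X) V = blockProd A V :=
  blockProd_congr fun _ hi => Function.update_of_ne (ne_of_mem_of_not_mem hi ha) _ _

theorem blockProd_update_of_min (ha : a ∈ V) (hmin : ∀ b ∈ V, a ≤ b) (X : 𝔘) :
    blockProd (Function.update A a X) V = X * blockProd A (V.erase a) := by
  rw [blockProd_eq_mul_erase ha hmin, Function.update_self,
    blockProd_update_of_notMem (notMem_erase a V)]

end blockProd

namespace IsSetPartition

variable {S : Finset ℕ} {π : Finset (Finset ℕ)} {a : ℕ}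

theorem prod_eq_mul_prod_erase_blockOf {M : Type*} [CommMonoid M] (h : IsSetPartition S π)
    (ha : a ∈ S) (f : Finset ℕ → M) :
    ∏ V ∈ π, f (V.erase a) = f ((blockOf π a).erase a) * ∏ V ∈ π.erase (blockOf π a), f V := by
  rw [← mul_prod_erase π _ (h.blockOf_mem ha).1]
  congr 1
  exact prod_congr rfl fun V hV => by rw [erase_eq_of_notMem (h.notMem_of_mem_erase_blockOf hV)]

theorem prod_blockProd_update [Monoid 𝔘] {M : Type*} [CommMonoid M] (h : IsSetPartition S π)
    (ha : a ∈ S) (hmin : ∀ b ∈ S, a ≤ b) (A : ℕ → 𝔘) (X : 𝔘) (f : 𝔘 → M) :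
    ∏ V ∈ π, f (blockProd (Function.update A a X) V) =
      f (X * blockProd A ((blockOf π a).erase a)) *
        ∏ V ∈ π.erase (blockOf π a), f (blockProd A V) := by
  obtain ⟨hB, haB⟩ := h.blockOf_mem ha
  rw [← mul_prod_erase π _ hB, blockProd_update_of_min haB fun b hb => hmin b (h.1 _ hB hb)]
  congr 1
  exact prod_congr rfl fun V hV => by
    rw [blockProd_update_of_notMem (h.notMem_of_mem_erase_blockOf hV)]

end IsSetPartition

theorem exists_cumulant_update_eq_sum_mul_sub [Monoid 𝔘] (ω : 𝔘 → ℂ) (hω : ω 1 = 1)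
    (A : ℕ → 𝔘) {S : Finset ℕ} {a : ℕ} (ha : a ∈ S) (hmin : ∀ b ∈ S, a ≤ b)
    (hS : (S.erase a).Nonempty) :
    ∃ (c : Finset (Finset ℕ) → ℂ) (B : Finset (Finset ℕ) → 𝔘), ∀ X : 𝔘,
      cumulant ω (Function.update A a X) S =
        ∑ π ∈ setPartitions S, c π * (ω (X * B π) - ω X * ω (B π)) := by
  refine ⟨fun π => cumulantCoeff ℂ π.card * ∏ V ∈ π.erase (blockOf π a), ω (blockProd A V),
    fun π => blockProd A ((blockOf π a).erase a), fun X => ?_⟩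
  have hvanish := sum_setPartitions_cumulantCoeff_mul_prod_erase ha hS (fun V => ω (blockProd A V))
    (by rw [blockProd_empty, hω])
  calc cumulant ω (Function.update A a X) S
      = ∑ π ∈ setPartitions S,
          ((cumulantCoeff ℂ π.card * ∏ V ∈ π.erase (blockOf π a), ω (blockProd A V)) *
              (ω (X * blockProd A ((blockOf π a).erase a)) -
                ω X * ω (blockProd A ((blockOf π a).erase a))) +
            ω X * (cumulantCoeff ℂ π.card * ∏ V ∈ π, ω (blockProd A (V.erase a)))) := by
        refine sum_congr rfl fun π hπ => ?_
        have h := mem_setPartitions.1 hπ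
        rw [h.prod_blockProd_update ha hmin A X ω,
          h.prod_eq_mul_prod_erase_blockOf ha fun V => ω (blockProd A V), cumulantCoeff]
        ring
    _ = _ := by rw [sum_add_distrib, ← mul_sum, hvanish, mul_zero, add_zero]

theorem classical_cumulant_clustering_general {G ι : Type*}
    [NormedRing 𝔘] [StarRing 𝔘] [NormedAlgebra ℂ 𝔘]
    (α : G → 𝔘 ≃⋆ₐ[ℂ] 𝔘)
    (ω : 𝔘 →ₗ[ℂ] ℂ) (hω : IsState ω)
    (l : Filter ι) (g : ι → G)
    (hcl : ∀ A B : 𝔘, Filter.Tendsto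
      (fun i => ω (α (g i) A * B) - ω (α (g i) A) * ω B) l (𝓝 0)) :
    ∀ n, 2 ≤ n → ∀ A : ℕ → 𝔘,
      Filter.Tendsto
        (fun i => cumulant ⇑ω (Function.update A 1 (α (g i) (A 1))) (Finset.Icc 1 n))
        l (𝓝 0) := by
  intro n hn A
  have h1 : 1 ∈ Icc 1 n := mem_Icc.2 ⟨le_rfl, by omega⟩
  have h2 : 2 ∈ (Icc 1 n).erase 1 := mem_erase.2 ⟨by omega, mem_Icc.2 ⟨by omega, hn⟩⟩
  obtain ⟨c, B, hcum⟩ := exists_cumulant_update_eq_sum_mul_sub ω hω.unital A h1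
    (fun b hb => (mem_Icc.1 hb).1) ⟨2, h2⟩
  simp_rw [hcum]
  simpa using tendsto_finsetSum _ fun π _ => (hcl (A 1) (B π)).const_mul (c π)

/-- if the state is G-clustering along the net g^i, then every n-th classical
cumulant with the first argument translated vanishes along the net. -/
theorem classical_cumulant_clustering {G ι : Type*} [Group G] [TopologicalSpace G] [IsTopologicalGroup G]
    [LocallyCompactSpace G]
    [NormedRing 𝔘] [StarRing 𝔘] [CStarRing 𝔘] [NormedAlgebra ℂ 𝔘] [StarModule ℂ 𝔘]
    [CompleteSpace 𝔘]
    (α : G → 𝔘 ≃⋆ₐ[ℂ] 𝔘) (hα : IsStarAutoRep α)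
    (ω : 𝔘 →ₗ[ℂ] ℂ) (hω : IsState ω)
    (l : Filter ι) (g : ι → G)
    (hcl : ∀ A B : 𝔘, Filter.Tendsto
      (fun i => ω (α (g i) A * B) - ω (α (g i) A) * ω B) l (𝓝 0)) :
    ∀ n, 2 ≤ n → ∀ A : ℕ → 𝔘,
      Filter.Tendsto
        (fun i => cumulant ⇑ω (Function.update A 1 (α (g i) (A 1))) (Finset.Icc 1 n))
        l (𝓝 0) :=
  classical_cumulant_clustering_general α ω hω l g hcl
end
end

section
/- Let (𝔘, G, α) be a C*-dynamical system that is asymptotically abelian along a net g^i (lim_i ‖[α_{g^i}A, B]‖ = 0 for all A, B ∈ 𝔘). If ω is a state satisfying the two-element clustering property lim_i (ω(α_{g^i}(A)B) − ω(α_{g^i}A)ω(B)) = 0 for all A, B, then ω also satisfies the three-element clustering property: lim_i (ω(A α_{g^i}(B) C) − ω(AC)ω(α_{g^i}B)) = 0 for all A, B, C ∈ 𝔘. -/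
/-! Asymptotic abelianness moves `α_{g^i}(B)` to the front of `A α_{g^i}(B) C` up to commutators
that vanish in norm, hence under `ω` since `‖ω‖ ≤ 1`; two-element clustering applied to `B` and
`AC` then factorises `ω(α_{g^i}(B) A C)`. -/

open scoped Classical
open Filter Topology

noncomputable section

variable {𝔘 : Type*}

theorem tendsto_norm_mul_mul_sub_mul_of_tendsto_norm_commutator {R ι : Type*}
    [NonUnitalSeminormedRing R] {l : Filter ι} {x : ι → R}
    (hx : ∀ y, Tendsto (fun i => ‖x i * y - y * x i‖) l (𝓝 0)) (a c : R) :
    Tendsto (fun i => ‖a * x i * c - x i * (a * c)‖) l (𝓝 0) := by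
  have hsplit : ∀ i, a * x i * c - x i * (a * c) =
      a * (x i * c - c * x i) - (x i * (a * c) - a * c * x i) := fun i => by
    noncomm_ring
  refine squeeze_zero (fun i => norm_nonneg _) (fun i => ?_)
    (by simpa using ((hx c).const_mul ‖a‖).add (hx (a * c)))
  rw [hsplit]
  exact (norm_sub_le _ _).trans (by gcongr; exact norm_mul_le _ _)

theorem two_element_implies_three_element_clustering_general {G ι : Type*}
    [NormedRing 𝔘] [StarRing 𝔘] [NormedAlgebra ℂ 𝔘]
    (α : G → 𝔘 ≃⋆ₐ[ℂ] 𝔘)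
    (ω : 𝔘 →ₗ[ℂ] ℂ) (hωb : ∀ X : 𝔘, ‖ω X‖ ≤ ‖X‖)
    (l : Filter ι) (g : ι → G)
    (hab : ∀ A B : 𝔘, Filter.Tendsto
      (fun i => ‖α (g i) A * B - B * α (g i) A‖) l (𝓝 0))
    (hcl : ∀ A B : 𝔘, Filter.Tendsto
      (fun i => ω (α (g i) A * B) - ω (α (g i) A) * ω B) l (𝓝 0)) :
    ∀ A B C : 𝔘, Filter.Tendsto
      (fun i => ω (A * α (g i) B * C) - ω (A * C) * ω (α (g i) B)) l (𝓝 0) := by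
  intro A B C
  have hcomm : Tendsto (fun i => ω (A * α (g i) B * C - α (g i) B * (A * C))) l (𝓝 0) :=
    squeeze_zero_norm (fun i => hωb _)
      (tendsto_norm_mul_mul_sub_mul_of_tendsto_norm_commutator (hab B) A C)
  simpa using (hcomm.add (hcl B (A * C))).congr fun i => by rw [map_sub]; ring

/-- in an asymptotically abelian C*-dynamical system, two-element clustering
implies the three-element clustering property. -/
theorem two_element_implies_three_element_clustering {G ι : Type*} [Group G]
    [TopologicalSpace G] [IsTopologicalGroup G] [LocallyCompactSpace G]
    [NormedRing 𝔘] [StarRing 𝔘] [CStarRing 𝔘] [NormedAlgebra ℂ 𝔘] [StarModule ℂ 𝔘]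
    [CompleteSpace 𝔘]
    (α : G → 𝔘 ≃⋆ₐ[ℂ] 𝔘) (hα : IsStarAutoRep α)
    (ω : 𝔘 →ₗ[ℂ] ℂ) (hω : IsState ω) (hωb : ∀ X : 𝔘, ‖ω X‖ ≤ ‖X‖)
    (l : Filter ι) (g : ι → G)
    (hab : ∀ A B : 𝔘, Filter.Tendsto
      (fun i => ‖α (g i) A * B - B * α (g i) A‖) l (𝓝 0))
    (hcl : ∀ A B : 𝔘, Filter.Tendsto
      (fun i => ω (α (g i) A * B) - ω (α (g i) A) * ω B) l (𝓝 0)) :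
    ∀ A B C : 𝔘, Filter.Tendsto
      (fun i => ω (A * α (g i) B * C) - ω (A * C) * ω (α (g i) B)) l (𝓝 0) :=
  two_element_implies_three_element_clustering_general α ω hωb l g hab hcl
end
end
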